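/- arXiv:1405.1593 — 2 statements merged into one kernel-verified Lean document; each statement's English description precedes it below -/
import Mathlib

section
/- Equivalence of nonanticipativity conditions MC3 and MC4 (Lemma 2, part of): the family of conditional-independence conditions "for every i = 0,1,...,n−1, (Y_0,...,Y_i) is conditionally independent of X_{i+1} given (X_0,...,X_i)" holds if and only if the family "for every i = 0,1,...,n−1, (X_{i+1}, X_{i+2}, ..., X_n) is conditionally independent of (Y_0,...,Y_i) given (X_0,...,X_i)" holds. -/
/-!
Conditional independence of `m₁` and `m₂` given `m'` is equivalent to the Doob-type condition
`P[t | m' ⊔ m₁] = P[t | m']` for all `t ∈ m₂`. Write `𝓕ₖ = σ(X₀, …, Xₖ)`. Since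
`𝓕ₖ ⊔ σ(X_{k+1}) = 𝓕_{k+1}` and `𝓕ᵢ ⊔ σ(X_{i+1}, …, Xₙ) = 𝓕ₙ`, MC3 says that the conditional
probability of an event of `σ(Y₀, …, Yₖ)` does not change from `𝓕ₖ` to `𝓕_{k+1}`, and MC4 says
that the conditional probability of an event of `σ(Y₀, …, Yᵢ)` does not change from `𝓕ᵢ` to `𝓕ₙ`.
As the σ-algebras of `Y` increase, the steps of MC3 telescope into MC4. Conversely, MC3 is MC4
with the block `(X_{i+1}, …, Xₙ)` projected onto its first coordinate.
-/

open MeasureTheory ProbabilityTheory MeasurableSpace Set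

section PiSystem

variable {Ω : Type*} {m m₁ m₂ mΩ : MeasurableSpace Ω}

lemma isPiSystem_image2_inter :
    IsPiSystem (image2 (· ∩ ·) {s | MeasurableSet[m₁] s} {s | MeasurableSet[m₂] s}) := by
  rintro _ ⟨s₁, hs₁, u₁, hu₁, rfl⟩ _ ⟨s₂, hs₂, u₂, hu₂, rfl⟩ -
  exact ⟨s₁ ∩ s₂, hs₁.inter hs₂, u₁ ∩ u₂, hu₁.inter hu₂, inter_inter_inter_comm _ _ _ _⟩

lemma sup_eq_generateFrom_image2_inter :
    m₁ ⊔ m₂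
      = generateFrom (image2 (· ∩ ·) {s | MeasurableSet[m₁] s} {s | MeasurableSet[m₂] s}) := by
  refine le_antisymm (sup_le ?_ ?_) (generateFrom_le ?_)
  · exact fun s hs => measurableSet_generateFrom ⟨s, hs, univ, .univ, inter_univ s⟩
  · exact fun u hu => measurableSet_generateFrom ⟨univ, .univ, u, hu, univ_inter u⟩
  · rintro _ ⟨s, hs, u, hu, rfl⟩
    exact (le_sup_left (b := m₂) s hs).inter (le_sup_right (a := m₁) u hu)

lemma setIntegral_eq_of_isPiSystem {μ : Measure Ω} {S : Set (Set Ω)} {f g : Ω → ℝ}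
    (hm : m ≤ mΩ) (h_eq : m = generateFrom S) (h_inter : IsPiSystem S) (hf : Integrable f μ)
    (hg : Integrable g μ) (h_univ : ∫ x, f x ∂μ = ∫ x, g x ∂μ)
    (h_basic : ∀ s ∈ S, ∫ x in s, f x ∂μ = ∫ x in s, g x ∂μ) {s : Set Ω}
    (hs : MeasurableSet[m] s) : ∫ x in s, f x ∂μ = ∫ x in s, g x ∂μ := by
  induction s, hs using induction_on_inter h_eq h_inter with
  | empty => simp
  | basic s hs => exact h_basic s hs
  | compl s hs ih =>
    have hf_add := integral_add_compl (hm s hs) hf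
    have hg_add := integral_add_compl (hm s hs) hg
    linarith
  | iUnion F hF_disj hF_meas ih =>
    rw [integral_iUnion (fun k => hm _ (hF_meas k)) hF_disj hf.integrableOn,
      integral_iUnion (fun k => hm _ (hF_meas k)) hF_disj hg.integrableOn]
    exact tsum_congr ih

end PiSystem

section FiniteBlocks

variable {Ω : Type*} {𝒳 : ℕ → Type*} [∀ i, MeasurableSpace (𝒳 i)] (X : ∀ i, Ω → 𝒳 i)

lemma comap_tuple_eq_biSup_range {ι : Type*} (e : ι → ℕ) :
    MeasurableSpace.comap (fun ω (j : ι) => X (e j) ω) MeasurableSpace.pi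
      = ⨆ a ∈ range e, MeasurableSpace.comap (X a) inferInstance := by
  rw [iSup_range, MeasurableSpace.pi, comap_iSup]
  simp_rw [comap_comp]
  rfl

lemma comap_prefix_eq_biSup (k : ℕ) :
    MeasurableSpace.comap (fun ω (j : Fin k) => X j ω) MeasurableSpace.pi
      = ⨆ a ∈ Iio k, MeasurableSpace.comap (X a) inferInstance := by
  rw [← Fin.range_val]
  exact comap_tuple_eq_biSup_range X Fin.val

lemma comap_block_eq_biSup (i n : ℕ) :
    MeasurableSpace.comap (fun ω (j : Fin (n - i)) => X (i + 1 + j) ω) MeasurableSpace.pi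
      = ⨆ a ∈ Ico (i + 1) (n + 1), MeasurableSpace.comap (X a) inferInstance := by
  have h_range : range (fun j : Fin (n - i) => i + 1 + (j : ℕ)) = Ico (i + 1) (n + 1) := by
    ext a
    simp only [mem_range, mem_Ico, Fin.exists_iff]
    exact ⟨fun ⟨j, hj, h⟩ => by omega, fun h => ⟨a - (i + 1), by omega, by omega⟩⟩
  rw [← h_range]
  exact comap_tuple_eq_biSup_range X _

lemma comap_prefix_mono {k l : ℕ} (h : k ≤ l) :
    MeasurableSpace.comap (fun ω (j : Fin k) => X j ω) MeasurableSpace.pi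
      ≤ MeasurableSpace.comap (fun ω (j : Fin l) => X j ω) MeasurableSpace.pi := by
  rw [comap_prefix_eq_biSup, comap_prefix_eq_biSup]
  exact biSup_mono fun a ha => lt_of_lt_of_le ha h

lemma comap_prefix_sup_comap_succ (k : ℕ) :
    MeasurableSpace.comap (fun ω (j : Fin k) => X j ω) MeasurableSpace.pi
        ⊔ MeasurableSpace.comap (X k) inferInstance
      = MeasurableSpace.comap (fun ω (j : Fin (k + 1)) => X j ω) MeasurableSpace.pi := by
  have h_Iio : Iio (k + 1) = insert k (Iio k) := by
    ext a
    simp only [mem_Iio, mem_insert_iff]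
    omega
  rw [comap_prefix_eq_biSup, comap_prefix_eq_biSup, h_Iio, iSup_insert, sup_comm]

lemma comap_prefix_sup_comap_block {i n : ℕ} (h : i ≤ n) :
    MeasurableSpace.comap (fun ω (j : Fin (i + 1)) => X j ω) MeasurableSpace.pi
        ⊔ MeasurableSpace.comap (fun ω (j : Fin (n - i)) => X (i + 1 + j) ω) MeasurableSpace.pi
      = MeasurableSpace.comap (fun ω (j : Fin (n + 1)) => X j ω) MeasurableSpace.pi := by
  rw [comap_prefix_eq_biSup, comap_prefix_eq_biSup, comap_block_eq_biSup, ← iSup_union,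
    Iio_union_Ico_eq_Iio (by omega)]

end FiniteBlocks

namespace ProbabilityTheory

variable {Ω : Type*} {m' m₁ m₂ mΩ : MeasurableSpace Ω} {μ : Measure Ω}

lemma condExp_eq_of_forall_condExp_succ_eq {𝓕 𝓖 : ℕ → MeasurableSpace Ω} (h𝓖 : Monotone 𝓖)
    {n : ℕ} (h : ∀ k < n, ∀ t, MeasurableSet[𝓖 k] t → μ⟦t | 𝓕 (k + 1)⟧ =ᵐ[μ] μ⟦t | 𝓕 k⟧)
    {i : ℕ} (hi : i ≤ n) {t : Set Ω} (ht : MeasurableSet[𝓖 i] t) :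
    μ⟦t | 𝓕 n⟧ =ᵐ[μ] μ⟦t | 𝓕 i⟧ := by
  induction n, hi using Nat.le_induction with
  | base => rfl
  | succ k hik ih =>
    exact (h k k.lt_add_one t (h𝓖 hik t ht)).trans (ih fun l hl => h l (by omega))

variable [IsFiniteMeasure μ]

lemma condExp_indicator_eq_mul_condExp {c : Ω → ℝ} {u : Set Ω} (hc : StronglyMeasurable[m'] c)
    (hc_int : Integrable c μ) (hu : MeasurableSet u) :
    μ[u.indicator c | m'] =ᵐ[μ] c * μ⟦u | m'⟧ := by
  have h_ind : u.indicator c = c * u.indicator 1 := by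
    ext ω; by_cases hω : ω ∈ u <;> simp [hω]
  rw [h_ind]
  exact condExp_mul_of_stronglyMeasurable_left hc (h_ind ▸ hc_int.indicator hu)
    ((integrable_const 1).indicator hu)

variable [StandardBorelSpace Ω]

lemma CondIndep.condExp_sup_eq {hm' : m' ≤ mΩ} (hm₁ : m₁ ≤ mΩ) (hm₂ : m₂ ≤ mΩ)
    (h : CondIndep m' m₁ m₂ hm' μ) {t : Set Ω} (ht : MeasurableSet[m₂] t) :
    μ⟦t | m' ⊔ m₁⟧ =ᵐ[μ] μ⟦t | m'⟧ := by
  have h_mul := (condIndep_iff _ _ _ hm' hm₁ hm₂ μ).mp h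
  have ht_int : Integrable (t.indicator fun _ => (1 : ℝ)) μ :=
    (integrable_const 1).indicator (hm₂ t ht)
  have h_meas : StronglyMeasurable[m' ⊔ m₁] (μ⟦t | m'⟧) :=
    stronglyMeasurable_condExp.mono le_sup_left
  refine (ae_eq_condExp_of_forall_setIntegral_eq (sup_le hm' hm₁) ht_int
    (fun _ _ _ => integrable_condExp.integrableOn) (fun A hA _ => ?_)
    h_meas.aestronglyMeasurable).symm
  refine setIntegral_eq_of_isPiSystem (sup_le hm' hm₁) sup_eq_generateFrom_image2_inter
    isPiSystem_image2_inter integrable_condExp ht_int (integral_condExp hm') ?_ hA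
  rintro _ ⟨s, hs, u, hu, rfl⟩
  have hu' : MeasurableSet u := hm₁ u hu
  -- `μ⟦t | m'⟧` factors out of `μ[1_u · μ⟦t | m'⟧ | m']`, and conditional independence turns
  -- the resulting product `μ⟦t | m'⟧ · μ⟦u | m'⟧` into `μ⟦u ∩ t | m'⟧`.
  calc ∫ x in s ∩ u, (μ⟦t | m'⟧) x ∂μ
      = ∫ x in s, μ[u.indicator (μ⟦t | m'⟧) | m'] x ∂μ := by
        rw [setIntegral_condExp hm' (integrable_condExp.indicator hu') hs,
          setIntegral_indicator hu']
    _ = ∫ x in s, (μ⟦u ∩ t | m'⟧) x ∂μ := by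
        refine setIntegral_congr_ae (hm' s hs) ?_
        filter_upwards [condExp_indicator_eq_mul_condExp stronglyMeasurable_condExp
          integrable_condExp hu', h_mul u t hu ht] with ω h_pull h_indep _
        rw [h_pull, h_indep, Pi.mul_apply, Pi.mul_apply, mul_comm]
    _ = ∫ x in s ∩ u, t.indicator (fun _ => (1 : ℝ)) x ∂μ := by
        rw [setIntegral_condExp hm' ((integrable_const 1).indicator (hu'.inter (hm₂ t ht))) hs,
          ← indicator_indicator, setIntegral_indicator hu']

lemma condIndep_of_condExp_sup_eq (hm' : m' ≤ mΩ) (hm₁ : m₁ ≤ mΩ) (hm₂ : m₂ ≤ mΩ)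
    (h : ∀ t, MeasurableSet[m₂] t → μ⟦t | m' ⊔ m₁⟧ =ᵐ[μ] μ⟦t | m'⟧) :
    CondIndep m' m₁ m₂ hm' μ := by
  rw [condIndep_iff _ _ _ hm' hm₁ hm₂]
  intro u t hu ht
  have hu' : MeasurableSet u := hm₁ u hu
  calc μ⟦u ∩ t | m'⟧
      = μ[u.indicator (t.indicator fun _ => (1 : ℝ)) | m'] := by rw [indicator_indicator]
    _ =ᵐ[μ] μ[μ[u.indicator (t.indicator fun _ => (1 : ℝ)) | m' ⊔ m₁] | m'] :=
        (condExp_condExp_of_le le_sup_left (sup_le hm' hm₁)).symm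
    _ =ᵐ[μ] μ[u.indicator (μ⟦t | m' ⊔ m₁⟧) | m'] :=
        condExp_congr_ae (condExp_indicator ((integrable_const 1).indicator (hm₂ t ht))
          (le_sup_right (a := m') u hu))
    _ =ᵐ[μ] μ[u.indicator (μ⟦t | m'⟧) | m'] := condExp_congr_ae ((h t ht).indicator (s := u))
    _ =ᵐ[μ] μ⟦t | m'⟧ * μ⟦u | m'⟧ :=
        condExp_indicator_eq_mul_condExp stronglyMeasurable_condExp integrable_condExp hu'
    _ = μ⟦u | m'⟧ * μ⟦t | m'⟧ := mul_comm _ _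

end ProbabilityTheory

theorem mc3_iff_mc4_general
    {Ω : Type*} [MeasurableSpace Ω] [StandardBorelSpace Ω]
    (P : Measure Ω) [IsProbabilityMeasure P]
    (n : ℕ)
    (𝒳 𝒴 : ℕ → Type*)
    [∀ i, MeasurableSpace (𝒳 i)]
    [∀ i, MeasurableSpace (𝒴 i)]
    (X : ∀ i, Ω → 𝒳 i) (Y : ∀ i, Ω → 𝒴 i)
    (hX : ∀ i, Measurable (X i)) (hY : ∀ i, Measurable (Y i)) :
    -- MC3 : for every `i < n`, `(Y_0, …, Y_i) ⫫ X_{i+1} | (X_0, …, X_i)`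
    (∀ i < n,
      CondIndepFun
        (MeasurableSpace.comap (fun ω => fun j : Fin (i + 1) => X j ω) inferInstance)
        ((measurable_pi_lambda _ fun j : Fin (i + 1) => hX j).comap_le)
        (fun ω => fun j : Fin (i + 1) => Y j ω) (X (i + 1)) P)
    ↔
    -- MC4 : for every `i < n`, `(X_{i+1}, …, X_n) ⫫ (Y_0, …, Y_i) | (X_0, …, X_i)`
    (∀ i < n,
      CondIndepFun
        (MeasurableSpace.comap (fun ω => fun j : Fin (i + 1) => X j ω) inferInstance)
        ((measurable_pi_lambda _ fun j : Fin (i + 1) => hX j).comap_le)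
        (fun ω => fun j : Fin (n - i) => X (i + 1 + j) ω)
        (fun ω => fun j : Fin (i + 1) => Y j ω) P) := by
  have hY_prefix : ∀ k, Measurable fun ω (j : Fin k) => Y j ω :=
    fun k => measurable_pi_lambda _ fun j => hY j
  refine ⟨fun h3 i hi => ?_, fun h4 i hi => ?_⟩
  · refine condIndep_of_condExp_sup_eq _ (measurable_pi_lambda _ fun j => hX _).comap_le
      (hY_prefix (i + 1)).comap_le fun t ht => ?_
    rw [comap_prefix_sup_comap_block X hi.le]
    refine condExp_eq_of_forall_condExp_succ_eq
      (𝓕 := fun k => MeasurableSpace.comap (fun ω (j : Fin (k + 1)) => X j ω) MeasurableSpace.pi)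
      (𝓖 := fun k => MeasurableSpace.comap (fun ω (j : Fin (k + 1)) => Y j ω) MeasurableSpace.pi)
      (fun k l hkl => comap_prefix_mono Y (by omega)) (fun k hk s hs => ?_) hi.le ht
    have h := CondIndep.condExp_sup_eq (hX (k + 1)).comap_le (hY_prefix (k + 1)).comap_le
      (h3 k hk).symm hs
    rwa [comap_prefix_sup_comap_succ] at h
  · have h_head : Measurable fun v : (∀ j : Fin (n - i), 𝒳 (i + 1 + j)) => v ⟨0, by omega⟩ :=
      measurable_pi_apply _
    exact ((h4 i hi).comp h_head measurable_id).symm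

/-- **Equivalence of nonanticipativity conditions MC3 and MC4** (Lemma 2, part of):
for processes `X_0, …, X_n` and `Y_0, …, Y_n` on a probability space, the family of conditions
"for every `i < n`, `(Y_0, …, Y_i)` is conditionally independent of `X_{i+1}` given
`(X_0, …, X_i)`" holds iff the family
"for every `i < n`, `(X_{i+1}, …, X_n)` is conditionally independent of `(Y_0, …, Y_i)` given
`(X_0, …, X_i)`" holds. -/
theorem mc3_iff_mc4
    {Ω : Type*} [MeasurableSpace Ω] [StandardBorelSpace Ω] [Nonempty Ω]
    (P : Measure Ω) [IsProbabilityMeasure P]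
    (n : ℕ)
    (𝒳 𝒴 : ℕ → Type*)
    [∀ i, MeasurableSpace (𝒳 i)] [∀ i, StandardBorelSpace (𝒳 i)]
    [∀ i, MeasurableSpace (𝒴 i)] [∀ i, StandardBorelSpace (𝒴 i)]
    (X : ∀ i, Ω → 𝒳 i) (Y : ∀ i, Ω → 𝒴 i)
    (hX : ∀ i, Measurable (X i)) (hY : ∀ i, Measurable (Y i)) :
    -- MC3 : for every `i < n`, `(Y_0, …, Y_i) ⫫ X_{i+1} | (X_0, …, X_i)`
    (∀ i < n,
      CondIndepFun
        (MeasurableSpace.comap (fun ω => fun j : Fin (i + 1) => X j ω) inferInstance)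
        ((measurable_pi_lambda _ fun j : Fin (i + 1) => hX j).comap_le)
        (fun ω => fun j : Fin (i + 1) => Y j ω) (X (i + 1)) P)
    ↔
    -- MC4 : for every `i < n`, `(X_{i+1}, …, X_n) ⫫ (Y_0, …, Y_i) | (X_0, …, X_i)`
    (∀ i < n,
      CondIndepFun
        (MeasurableSpace.comap (fun ω => fun j : Fin (i + 1) => X j ω) inferInstance)
        ((measurable_pi_lambda _ fun j : Fin (i + 1) => hX j).comap_le)
        (fun ω => fun j : Fin (n - i) => X (i + 1 + j) ω)
        (fun ω => fun j : Fin (i + 1) => Y j ω) P) :=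
  mc3_iff_mc4_general P n 𝒳 𝒴 X Y hX hY
end

section
/- The reproduction process of the BSMS(p) is a first-order Markov chain with the same transition probabilities as the source (part of Theorem 9): fix p ∈ (0,1) and D ∈ (0,1/2), and let ((X_i, Y_i))_{i=0,…,n} be the Markov chain on {0,1}² with transition matrix Π((x',y') | (x,y)) = T_p(x' | x) · Q*(y' | y, x') and initial distribution π̄(x,y) = (1−D)/2 if x=y, D/2 otherwise. Then for every (y_0, y_1, …, y_n) ∈ {0,1}^{n+1}, ℙ(Y_0 = y_0, Y_1 = y_1, …, Y_n = y_n) = (1/2) · ∏_{i=1}^{n} T_p(y_i | y_{i−1}); that is, the marginal process (Y_i) is itself a stationary binary symmetric Markov chain with flip probability p and uniform initial distribution. -/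
open MeasureTheory
open scoped ENNReal

/-- The BSMS(`p`) transition kernel on `{0,1}`: `T_p(x' | x) = 1 - p` if `x' = x`, `p`
otherwise. -/
noncomputable def bsmsKernel (p : ℝ) (x' x : Bool) : ℝ := if x' = x then 1 - p else p

/-- `α = (1-p)(1-D)/m` with `m = 1 - p - D + 2pD`. -/
noncomputable def bsmsAlpha (p D : ℝ) : ℝ := (1 - p) * (1 - D) / (1 - p - D + 2 * p * D)

/-- `β = p(1-D)/(1-m)` with `1 - m = p + D - 2pD`. -/
noncomputable def bsmsBeta (p D : ℝ) : ℝ := p * (1 - D) / (p + D - 2 * p * D)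

/-- The optimal reproduction kernel `Q*(y | y', x)` of the nonanticipative RDF of the
BSMS(`p`) with Hamming distortion. -/
noncomputable def bsmsQstar (p D : ℝ) (y' x y : Bool) : ℝ :=
  if y = x then (if y = y' then bsmsAlpha p D else bsmsBeta p D)
  else (if y = y' then 1 - bsmsBeta p D else 1 - bsmsAlpha p D)

/-- The transition matrix `Π((x',y') | (x,y)) = T_p(x' | x) · Q*(y' | y, x')` of the joint
source–reproduction pair process. -/
noncomputable def bsmsJointKernel (p D : ℝ) (z' z : Bool × Bool) : ℝ :=
  bsmsKernel p z'.1 z.1 * bsmsQstar p D z.2 z'.1 z'.2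

/-- The probability vector `π̄` on `{0,1}²`: `π̄(x,y) = (1-D)/2` if `x = y` and `D/2`
otherwise. -/
noncomputable def bsmsPiBar (D : ℝ) (z : Bool × Bool) : ℝ :=
  if z.1 = z.2 then (1 - D) / 2 else D / 2

/-!
Summing the joint trajectory probability `π̄(z₀) ∏ Π(z_{i+1} | z_i)` over the hidden source path,
the source letters can be eliminated one at a time from the front: the identity
`∑ₓ π̄(x, y) Π((x', y') | (x, y)) = T_p(y' | y) π̄(x', y')` says that `Π` carries the weights
`π̄(·, y)` to `T_p(y' | y) π̄(·, y')`. After `n` steps only `∑ₓ π̄(x, yₙ) = 1/2` is left.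
-/

theorem measure_forall_snd_eq_eq_sum {Ω ι α β : Type*} [MeasurableSpace Ω] [MeasurableSpace α]
    [MeasurableSpace β] [MeasurableSingletonClass (α × β)] [Fintype ι] [DecidableEq ι]
    [Fintype α] (P : Measure Ω) (Z : ι → Ω → α × β) (hZ : ∀ j, Measurable (Z j))
    (ys : ι → β) :
    P {ω | ∀ j, (Z j ω).2 = ys j} = ∑ xs : ι → α, P {ω | ∀ j, Z j ω = (xs j, ys j)} := by
  have hunion : {ω | ∀ j, (Z j ω).2 = ys j} = ⋃ xs : ι → α, {ω | ∀ j, Z j ω = (xs j, ys j)} := by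
    ext ω
    simp only [Set.mem_ofPred_eq, Set.mem_iUnion]
    exact ⟨fun h => ⟨fun j => (Z j ω).1, fun j => Prod.ext rfl (h j)⟩,
      fun ⟨xs, hxs⟩ j => by rw [hxs j]⟩
  have hdisj : Pairwise (Function.onFun Disjoint
      fun xs : ι → α => {ω | ∀ j, Z j ω = (xs j, ys j)}) :=
    fun xs xs' hne => Set.disjoint_left.mpr fun ω h h' =>
      hne (funext fun j => congrArg Prod.fst ((h j).symm.trans (h' j)))
  have hmeas (xs : ι → α) : MeasurableSet {ω | ∀ j, Z j ω = (xs j, ys j)} := by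
    simp only [Set.ofPred_forall]
    exact MeasurableSet.iInter fun j => hZ j (measurableSet_singleton _)
  rw [hunion, measure_iUnion hdisj hmeas, tsum_fintype]

theorem measure_trajectory_eq_ofReal_prod {Ω S : Type*} [MeasurableSpace Ω] (P : Measure Ω)
    (μ₀ : S → ℝ) (K : S → S → ℝ) (hK : ∀ z' z, 0 ≤ K z' z) (n : ℕ) (Z : ℕ → Ω → S)
    (hinit : ∀ z, P {ω | Z 0 ω = z} = ENNReal.ofReal (μ₀ z))
    (hmarkov : ∀ i < n, ∀ z : S, ∀ zs : Fin (i + 1) → S,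
      P {ω | ∀ j : Fin (i + 1), Z j ω = zs j} ≠ 0 →
      P ({ω | ∀ j : Fin (i + 1), Z j ω = zs j} ∩ {ω | Z (i + 1) ω = z})
        = ENNReal.ofReal (K z (zs (Fin.last i))) * P {ω | ∀ j : Fin (i + 1), Z j ω = zs j})
    {k : ℕ} (hk : k ≤ n) (zs : Fin (k + 1) → S) :
    P {ω | ∀ j : Fin (k + 1), Z j ω = zs j}
      = ENNReal.ofReal (μ₀ (zs 0) * ∏ i : Fin k, K (zs i.succ) (zs i.castSucc)) := by
  induction k with
  | zero => simpa [Fin.forall_fin_one] using hinit (zs 0)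
  | succ k ih =>
    set A := {ω | ∀ j : Fin (k + 1), Z j ω = zs j.castSucc}
    have hsplit : {ω | ∀ j : Fin (k + 2), Z j ω = zs j}
        = A ∩ {ω | Z (k + 1) ω = zs (Fin.last (k + 1))} := by
      ext ω
      simp [A, Fin.forall_fin_succ']
    have hstep : P (A ∩ {ω | Z (k + 1) ω = zs (Fin.last (k + 1))})
        = ENNReal.ofReal (K (zs (Fin.last (k + 1))) (zs (Fin.last k).castSucc)) * P A := by
      by_cases hA : P A = 0
      · rw [hA, mul_zero]
        exact measure_mono_null Set.inter_subset_left hA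
      · exact hmarkov k hk _ _ hA
    rw [hsplit, hstep, ih (by omega), ← ENNReal.ofReal_mul (hK _ _), Fin.prod_univ_castSucc]
    simp only [Fin.castSucc_zero, Fin.succ_castSucc, Fin.succ_last]
    congr 1
    ring

theorem sum_trajectory_prod_eq_of_intertwining {α β : Type*} [Fintype α]
    (μ : α × β → ℝ) (K : α × β → α × β → ℝ) (T : β → β → ℝ) (c : ℝ)
    (hμ : ∀ y, ∑ x, μ (x, y) = c)
    (hK : ∀ y y' x', ∑ x, μ (x, y) * K (x', y') (x, y) = T y' y * μ (x', y'))
    (k : ℕ) (ys : Fin (k + 1) → β) :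
    ∑ xs : Fin (k + 1) → α, μ (xs 0, ys 0) *
        ∏ i : Fin k, K (xs i.succ, ys i.succ) (xs i.castSucc, ys i.castSucc)
      = c * ∏ i : Fin k, T (ys i.succ) (ys i.castSucc) := by
  induction k with
  | zero =>
    simpa using (Fintype.sum_equiv (Equiv.funUnique (Fin 1) α) _ (fun x => μ (x, ys 0))
      fun _ => rfl).trans (hμ (ys 0))
  | succ k ih =>
    rw [← (Fin.consEquiv fun _ => α).sum_comp, Fintype.sum_prod_type, Finset.sum_comm]
    simp only [Fin.consEquiv_apply, Fin.prod_univ_succ (n := k), Fin.cons_zero, Fin.cons_succ,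
      ← Fin.succ_castSucc, Fin.castSucc_zero, ← mul_assoc, ← Finset.sum_mul, hK]
    have hrest := ih (fun i => ys i.succ)
    simp only [Fin.succ_zero_eq_one] at hrest
    simp only [mul_assoc, ← Finset.mul_sum, Fin.succ_zero_eq_one, hrest]
    ring

theorem sum_bsmsPiBar (D : ℝ) (y : Bool) : ∑ x, bsmsPiBar D (x, y) = 1 / 2 := by
  cases y <;>
  · simp only [Fintype.sum_bool, bsmsPiBar, Bool.true_eq_false, Bool.false_eq_true, ↓reduceIte]
    ring

section
variable {p D : ℝ}

theorem bsmsKernel_nonneg (hp : p ∈ Set.Icc 0 1) (x' x : Bool) : 0 ≤ bsmsKernel p x' x := by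
  unfold bsmsKernel
  split_ifs <;> linarith [hp.1, hp.2]

theorem bsmsAlpha_mem_Icc (hp : p ∈ Set.Icc 0 1) (hD : D ∈ Set.Icc 0 1) :
    bsmsAlpha p D ∈ Set.Icc 0 1 := by
  have hnum : 0 ≤ (1 - p) * (1 - D) := mul_nonneg (by linarith [hp.2]) (by linarith [hD.2])
  have hden : (1 - p) * (1 - D) ≤ 1 - p - D + 2 * p * D := by nlinarith [mul_nonneg hp.1 hD.1]
  exact ⟨div_nonneg hnum (hnum.trans hden), div_le_one_of_le₀ hden (hnum.trans hden)⟩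

theorem bsmsBeta_mem_Icc (hp : p ∈ Set.Icc 0 1) (hD : D ∈ Set.Icc 0 1) :
    bsmsBeta p D ∈ Set.Icc 0 1 := by
  have hnum : 0 ≤ p * (1 - D) := mul_nonneg hp.1 (by linarith [hD.2])
  have hden : p * (1 - D) ≤ p + D - 2 * p * D := by
    nlinarith [mul_nonneg hD.1 (by linarith [hp.2] : (0 : ℝ) ≤ 1 - p)]
  exact ⟨div_nonneg hnum (hnum.trans hden), div_le_one_of_le₀ hden (hnum.trans hden)⟩

theorem bsmsJointKernel_nonneg (hp : p ∈ Set.Icc 0 1) (hD : D ∈ Set.Icc 0 1)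
    (z' z : Bool × Bool) : 0 ≤ bsmsJointKernel p D z' z := by
  obtain ⟨hα₀, hα₁⟩ := bsmsAlpha_mem_Icc hp hD
  obtain ⟨hβ₀, hβ₁⟩ := bsmsBeta_mem_Icc hp hD
  refine mul_nonneg (bsmsKernel_nonneg hp _ _) ?_
  unfold bsmsQstar
  split_ifs <;> linarith

theorem bsmsPiBar_nonneg (hD : D ∈ Set.Icc 0 1) (z : Bool × Bool) : 0 ≤ bsmsPiBar D z := by
  unfold bsmsPiBar
  split_ifs <;> linarith [hD.1, hD.2]

theorem sum_bsmsPiBar_mul_bsmsJointKernel (hm : 1 - p - D + 2 * p * D ≠ 0)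
    (hm' : p + D - 2 * p * D ≠ 0) (y y' x' : Bool) :
    ∑ x, bsmsPiBar D (x, y) * bsmsJointKernel p D (x', y') (x, y)
      = bsmsKernel p y' y * bsmsPiBar D (x', y') := by
  have hα : bsmsAlpha p D * (1 - p - D + 2 * p * D) = (1 - p) * (1 - D) := div_mul_cancel₀ _ hm
  have hβ : bsmsBeta p D * (p + D - 2 * p * D) = p * (1 - D) := div_mul_cancel₀ _ hm'
  cases y <;> cases y' <;> cases x' <;>
  · simp only [Fintype.sum_bool, bsmsJointKernel, bsmsPiBar, bsmsQstar, bsmsKernel,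
      Bool.true_eq_false, Bool.false_eq_true, ↓reduceIte]
    -- in each case the two sides differ by `±1/2` times the defining identity of `α` or `β`
    first
    | linear_combination hα / 2 | linear_combination -hα / 2
    | linear_combination hβ / 2 | linear_combination -hβ / 2

end

/-- **The reproduction process of the BSMS(p) is a first-order Markov chain with the same
transition probabilities as the source** (part of Theorem 9): for the Markov chain
`Z_i = (X_i, Y_i)` on `{0,1}²` with transition matrix `Π((x',y')|(x,y)) = T_p(x'|x)·Q*(y'|y,x')`
and initial distribution `π̄`, the marginal process `(Y_i)` satisfies
`ℙ(Y_0 = y_0, …, Y_n = y_n) = (1/2) ∏_{i=1}^n T_p(y_i | y_{i-1})`, i.e. it is a stationary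
binary symmetric Markov chain with flip probability `p` and uniform initial distribution. -/
theorem bsms_reproduction_process_markov
    {Ω : Type*} [MeasurableSpace Ω] (P : Measure Ω)
    (p D : ℝ) (hp : p ∈ Set.Ioo (0 : ℝ) 1) (hD : D ∈ Set.Ioo (0 : ℝ) (1 / 2))
    (n : ℕ) (Z : ℕ → Ω → Bool × Bool)
    (hZm : ∀ i, Measurable (Z i))
    -- initial distribution `π̄`
    (hinit : ∀ z : Bool × Bool, P {ω | Z 0 ω = z} = ENNReal.ofReal (bsmsPiBar D z))
    -- Markov property with transition matrix `Π`
    (hmarkov : ∀ i : ℕ, ∀ h1 : 1 ≤ i, i ≤ n → ∀ z : Bool × Bool,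
      ∀ zs : Fin i → Bool × Bool,
      P {ω | ∀ j : Fin i, Z j ω = zs j} ≠ 0 →
      P ({ω | ∀ j : Fin i, Z j ω = zs j} ∩ {ω | Z i ω = z})
        = ENNReal.ofReal (bsmsJointKernel p D z (zs ⟨i - 1, by omega⟩))
            * P {ω | ∀ j : Fin i, Z j ω = zs j}) :
    ∀ ys : Fin (n + 1) → Bool,
      P {ω | ∀ j : Fin (n + 1), (Z j ω).2 = ys j}
        = ENNReal.ofReal
            ((1 / 2) * ∏ i : Fin n, bsmsKernel p (ys i.succ) (ys i.castSucc)) := by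
  intro ys
  have hp' : p ∈ Set.Icc 0 1 := Set.Ioo_subset_Icc_self hp
  have hD' : D ∈ Set.Icc 0 1 := ⟨hD.1.le, by linarith [hD.2]⟩
  have hm : 1 - p - D + 2 * p * D ≠ 0 := by nlinarith [hp.1, hp.2, hD.1, hD.2, mul_pos hp.1 hD.1]
  have hm' : p + D - 2 * p * D ≠ 0 := by nlinarith [hp.1, hp.2, hD.1, hD.2, mul_pos hp.1 hD.1]
  have htraj (xs : Fin (n + 1) → Bool) :=
    measure_trajectory_eq_ofReal_prod P (bsmsPiBar D) (bsmsJointKernel p D)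
      (bsmsJointKernel_nonneg hp' hD') n Z hinit
      (fun i hi => hmarkov (i + 1) (by omega) hi) le_rfl (fun j => (xs j, ys j))
  rw [measure_forall_snd_eq_eq_sum P (fun j : Fin (n + 1) => Z j) (fun j => hZm j) ys,
    Finset.sum_congr rfl fun xs _ => htraj xs, ← ENNReal.ofReal_sum_of_nonneg fun xs _ =>
      mul_nonneg (bsmsPiBar_nonneg hD' _)
        (Finset.prod_nonneg fun i _ => bsmsJointKernel_nonneg hp' hD' _ _),
    sum_trajectory_prod_eq_of_intertwining _ _ _ _ (sum_bsmsPiBar D)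
      (sum_bsmsPiBar_mul_bsmsJointKernel hm hm')]
end
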